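/- Let X₀,…,X_{n-1} be independent complex-valued random variables with |X_i| = 1 almost surely. Then for every α ≥ 0, P(|CF_n(s) − E[CF_n(s)]| ≥ α) ≤ 2 exp(−α²/2). -/

import Mathlib

open MeasureTheory Finset

noncomputable def ofdm (n : ℕ) (T : ℝ) (x : Fin n → ℂ) (t : ℝ) : ℂ :=
  ((Real.sqrt n : ℝ) : ℂ)⁻¹ *
    ∑ i : Fin n, x i * Complex.exp (Complex.I * ((2 * Real.pi * (i : ℕ) * t / T : ℝ) : ℂ))

noncomputable def crest (n : ℕ) (T : ℝ) (x : Fin n → ℂ) : ℝ :=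
  sSup ((fun t => ‖ofdm n T x t‖) '' Set.Icc (0 : ℝ) T)

/-!
McDiarmid's inequality by tensorization: for fixed `x'`, Hoeffding's lemma bounds the mgf of
`a ↦ f (a, x') - ∫ f (·, x')` by `exp ((c₀ / 2)² t² / 2)`, and the partial mean
`x' ↦ ∫ f (·, x')` again has bounded differences in the remaining coordinates, so induction on
the number of coordinates shows that `f - 𝔼 f` is sub-Gaussian with parameter `∑ (cᵢ / 2)²`.

The OFDM signal is linear in the symbols with coefficients of modulus `1 / √n`, so changing one
unit-modulus symbol moves the crest factor by at most `2 / √n`, and `∑ ((2 / √n) / 2)² = 1`.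
Retracting every symbol onto the unit circle makes this bounded-difference property hold on all
of `ℂⁿ` while changing the crest factor only on a null set.
-/

open Real
open scoped NNReal

lemma mem_Icc_ciInf_of_forall_sub_le {β : Type*} [Nonempty β] {g : β → ℝ} {C : ℝ}
    (h : ∀ a b, g a - g b ≤ C) (a : β) : g a ∈ Set.Icc (⨅ b, g b) ((⨅ b, g b) + C) := by
  have hbdd : BddBelow (Set.range g) := ⟨g a - C, by rintro _ ⟨b, rfl⟩; linarith [h a b]⟩
  refine ⟨ciInf_le hbdd a, ?_⟩
  linarith [le_ciInf fun b ↦ (by linarith [h a b] : g a - C ≤ g b)]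

namespace MeasureTheory

variable {α : Type*} [MeasurableSpace α]

lemma measurable_fin_cons {n : ℕ} :
    Measurable fun p : α × (Fin n → α) ↦ (Fin.cons p.1 p.2 : Fin (n + 1) → α) :=
  measurable_pi_iff.2 fun i ↦ Fin.cases (by simpa using measurable_fst)
    (fun j ↦ by simpa using measurable_snd.eval (a := j)) i

lemma measurePreserving_fin_cons {n : ℕ} (ν : Fin (n + 1) → Measure α)
    [∀ i, SigmaFinite (ν i)] :
    MeasurePreserving (fun p : α × (Fin n → α) ↦ (Fin.cons p.1 p.2 : Fin (n + 1) → α))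
      ((ν 0).prod (Measure.pi fun i ↦ ν i.succ)) (Measure.pi ν) := by
  convert (measurePreserving_piFinSuccAbove ν 0).symm using 1
  · ext p
    simp
  · simp only [Fin.succAbove_zero]

lemma integral_pi_fin_succ {n : ℕ} (ν : Fin (n + 1) → Measure α) [∀ i, SigmaFinite (ν i)]
    (g : (Fin (n + 1) → α) → ℝ) :
    ∫ x, g x ∂Measure.pi ν =
      ∫ p, g (Fin.cons p.1 p.2) ∂(ν 0).prod (Measure.pi fun i ↦ ν i.succ) := by
  rw [← (measurePreserving_piFinSuccAbove ν 0).symm.integral_comp']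
  simp only [Fin.succAbove_zero, MeasurableEquiv.piFinSuccAbove_symm_apply,
    Fin.insertNthEquiv_zero]
  rfl

end MeasureTheory

namespace ProbabilityTheory

section BoundedDifferences

variable {ι α : Type*} [DecidableEq ι]

def HasBoundedDifferences (f : (ι → α) → ℝ) (c : ι → ℝ≥0) : Prop :=
  ∀ x i a, f (Function.update x i a) - f x ≤ c i

namespace HasBoundedDifferences

variable {f : (ι → α) → ℝ} {c : ι → ℝ≥0}

lemma sub_le_sum [Fintype ι] (h : HasBoundedDifferences f c) (x y : ι → α) :
    f x - f y ≤ ∑ i, (c i : ℝ) := by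
  have key (s : Finset ι) : f (s.piecewise x y) - f y ≤ ∑ i ∈ s, (c i : ℝ) := by
    induction s using Finset.induction_on with
    | empty => simp
    | insert i s hi ih =>
      rw [Finset.piecewise_insert, Finset.sum_insert hi]
      linarith [h (s.piecewise x y) i (x i)]
  simpa using key univ

lemma mem_Icc [Fintype ι] (h : HasBoundedDifferences f c) (x₀ x : ι → α) :
    f x ∈ Set.Icc (f x₀ - ∑ i, (c i : ℝ)) (f x₀ + ∑ i, (c i : ℝ)) := by
  constructor <;> linarith [h.sub_le_sum x x₀, h.sub_le_sum x₀ x]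

variable [Fintype ι] [MeasurableSpace α] {μ : Measure (ι → α)} [IsFiniteMeasure μ] in
lemma integrable (h : HasBoundedDifferences f c) (hf : Measurable f) : Integrable f μ := by
  rcases isEmpty_or_nonempty (ι → α) with _ | ⟨⟨x₀⟩⟩
  · exact .of_isEmpty
  · exact .of_mem_Icc _ _ hf.aemeasurable (ae_of_all _ (h.mem_Icc x₀))

variable [Fintype ι] [MeasurableSpace α] {μ : Measure (ι → α)} [IsFiniteMeasure μ] in
lemma integrable_exp_mul (h : HasBoundedDifferences f c) (hf : Measurable f) (t : ℝ) :
    Integrable (fun x ↦ exp (t * f x)) μ := by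
  rcases isEmpty_or_nonempty (ι → α) with _ | ⟨⟨x₀⟩⟩
  · exact .of_isEmpty
  · exact integrable_exp_mul_of_mem_Icc hf.aemeasurable (ae_of_all _ (h.mem_Icc x₀))

lemma sub_const (h : HasBoundedDifferences f c) (b : ℝ) :
    HasBoundedDifferences (fun x ↦ f x - b) c := fun x i a ↦ by simpa using h x i a

lemma integral {β : Type*} [MeasurableSpace β] {ν : Measure β} [IsProbabilityMeasure ν]
    {g : β → (ι → α) → ℝ} (hg : ∀ b, HasBoundedDifferences (g b) c)
    (hint : ∀ x, Integrable (fun b ↦ g b x) ν) :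
    HasBoundedDifferences (fun x ↦ ∫ b, g b x ∂ν) c := fun x i a ↦ by
  rw [← integral_sub (hint _) (hint _)]
  simpa using integral_mono (hint _ |>.sub (hint _)) (integrable_const (c i : ℝ))
    fun b ↦ hg b x i a

lemma fin_cons_tail {n : ℕ} {f : (Fin (n + 1) → α) → ℝ} {c : Fin (n + 1) → ℝ≥0}
    (h : HasBoundedDifferences f c) (a : α) :
    HasBoundedDifferences (fun x : Fin n → α ↦ f (Fin.cons a x)) (fun i ↦ c i.succ) :=
  fun x i b ↦ by simpa only [Fin.cons_update] using h (Fin.cons a x) i.succ b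

lemma fin_cons_head {n : ℕ} {f : (Fin (n + 1) → α) → ℝ} {c : Fin (n + 1) → ℝ≥0}
    (h : HasBoundedDifferences f c) (x : Fin n → α) (a b : α) :
    f (Fin.cons a x) - f (Fin.cons b x) ≤ c 0 := by
  simpa only [Fin.update_cons_zero] using h (Fin.cons b x) 0 a

variable [MeasurableSpace α] in
lemma integral_fin_cons {n : ℕ} {f : (Fin (n + 1) → α) → ℝ} {c : Fin (n + 1) → ℝ≥0}
    (h : HasBoundedDifferences f c) (hf : Measurable f) (ν : Measure α) [IsProbabilityMeasure ν] :
    HasBoundedDifferences (fun x : Fin n → α ↦ ∫ a, f (Fin.cons a x) ∂ν) (fun i ↦ c i.succ) := by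
  have := nonempty_of_isProbabilityMeasure ν
  obtain ⟨x₀⟩ : Nonempty (Fin (n + 1) → α) := inferInstance
  refine .integral h.fin_cons_tail fun x ↦ .of_mem_Icc _ _ ?_ (ae_of_all _ fun a ↦ h.mem_Icc x₀ _)
  exact (hf.comp (measurable_fin_cons.comp (measurable_id.prodMk measurable_const))).aemeasurable

end HasBoundedDifferences

end BoundedDifferences

section Hoeffding

variable {β : Type*} [MeasurableSpace β] {ν : Measure β} [IsProbabilityMeasure ν]
  {g : β → ℝ} {C : ℝ≥0}

lemma hasSubgaussianMGF_of_forall_sub_le (hg : Measurable g) (h : ∀ a b, g a - g b ≤ C) :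
    HasSubgaussianMGF (fun a ↦ g a - ν[g]) ((C / 2) ^ 2) ν := by
  have := nonempty_of_isProbabilityMeasure ν
  simpa using hasSubgaussianMGF_of_mem_Icc hg.aemeasurable
    (ae_of_all _ (mem_Icc_ciInf_of_forall_sub_le h))

lemma integral_exp_mul_sub_le_of_forall_sub_le (hg : Measurable g)
    (h : ∀ a b, g a - g b ≤ C) (t E : ℝ) :
    ∫ a, exp (t * (g a - E)) ∂ν ≤
      exp (((C / 2) ^ 2 : ℝ≥0) * t ^ 2 / 2) * exp (t * (ν[g] - E)) :=
  calc ∫ a, exp (t * (g a - E)) ∂ν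
      = mgf (fun a ↦ g a - ν[g]) ν t * exp (t * (ν[g] - E)) := by
        rw [mgf, ← integral_mul_const]
        congr 1 with a
        rw [← exp_add]
        ring_nf
    _ ≤ _ := by
        gcongr
        exact (hasSubgaussianMGF_of_forall_sub_le hg h).mgf_le t

end Hoeffding

lemma HasSubgaussianMGF.measureReal_abs_ge_le {Ω : Type*} [MeasurableSpace Ω] {μ : Measure Ω}
    {Y : Ω → ℝ} {c : ℝ≥0} (h : HasSubgaussianMGF Y c μ) {ε : ℝ} (hε : 0 ≤ ε) :
    μ.real {ω | ε ≤ |Y ω|} ≤ 2 * exp (-ε ^ 2 / (2 * c)) := by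
  have : IsFiniteMeasure μ := by simpa [integrable_const_iff] using h.integrable_exp_mul 0
  calc μ.real {ω | ε ≤ |Y ω|} ≤ μ.real ({ω | ε ≤ Y ω} ∪ {ω | ε ≤ (-Y) ω}) :=
        measureReal_mono fun ω (hω : ε ≤ |Y ω|) ↦ le_abs.1 hω
    _ ≤ μ.real {ω | ε ≤ Y ω} + μ.real {ω | ε ≤ (-Y) ω} := measureReal_union_le _ _
    _ ≤ 2 * exp (-ε ^ 2 / (2 * c)) := by
        linarith [h.measure_ge_le hε, h.neg.measure_ge_le hε]

section McDiarmid

variable {α : Type*} [MeasurableSpace α]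

theorem mgf_sub_integral_pi_le {n : ℕ} {f : (Fin n → α) → ℝ} {c : Fin n → ℝ≥0}
    (hf : Measurable f) (hfc : HasBoundedDifferences f c)
    (ν : Fin n → Measure α) [∀ i, IsProbabilityMeasure (ν i)] (t : ℝ) :
    mgf (fun x ↦ f x - ∫ y, f y ∂Measure.pi ν) (Measure.pi ν) t ≤
      exp ((∑ i, (c i / 2) ^ 2 : ℝ≥0) * t ^ 2 / 2) := by
  induction n with
  | zero =>
    have h0 : (fun x ↦ f x - ∫ y, f y ∂Measure.pi ν) = 0 := by
      ext x; simp [Subsingleton.elim _ x]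
    rw [h0]
    simp [mgf]
  | succ n ih =>
    set π' := Measure.pi fun i : Fin n ↦ ν i.succ
    set E := ∫ y, f y ∂Measure.pi ν
    have hsection (x : Fin n → α) : Measurable fun a ↦ f (Fin.cons a x) :=
      hf.comp (measurable_fin_cons.comp (measurable_id.prodMk measurable_const))
    set m : (Fin n → α) → ℝ := fun x ↦ ∫ a, f (Fin.cons a x) ∂ν 0
    have hm : Measurable m := (hf.comp measurable_fin_cons).stronglyMeasurable.integral_prod_left'.measurable
    have hmc : HasBoundedDifferences m fun i ↦ c i.succ := hfc.integral_fin_cons hf (ν 0)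
    have hE : ∫ x, m x ∂π' = E :=
      ((integral_pi_fin_succ ν f).trans (integral_prod_symm _
        ((measurePreserving_fin_cons ν).integrable_comp_of_integrable (hfc.integrable hf)))).symm
    have hprod : Integrable (fun p : α × (Fin n → α) ↦ exp (t * (f (Fin.cons p.1 p.2) - E)))
        ((ν 0).prod π') :=
      (measurePreserving_fin_cons ν).integrable_comp_of_integrable
        ((hfc.sub_const E).integrable_exp_mul (hf.sub_const E) t)
    calc mgf (fun x ↦ f x - E) (Measure.pi ν) t
        = ∫ x, ∫ a, exp (t * (f (Fin.cons a x) - E)) ∂ν 0 ∂π' := by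
          rw [mgf, integral_pi_fin_succ, integral_prod_symm _ hprod]
      _ ≤ ∫ x, exp (((c 0 / 2) ^ 2 : ℝ≥0) * t ^ 2 / 2) * exp (t * (m x - E)) ∂π' :=
          integral_mono hprod.integral_prod_right
            (((hmc.sub_const E).integrable_exp_mul (hm.sub_const E) t).const_mul _)
            fun x ↦ integral_exp_mul_sub_le_of_forall_sub_le (hsection x) (hfc.fin_cons_head x) t E
      _ = exp (((c 0 / 2) ^ 2 : ℝ≥0) * t ^ 2 / 2) *
            mgf (fun x ↦ m x - ∫ y, m y ∂π') π' t := by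
          rw [integral_const_mul, hE, mgf]
      _ ≤ exp (((c 0 / 2) ^ 2 : ℝ≥0) * t ^ 2 / 2) *
            exp ((∑ i : Fin n, (c i.succ / 2) ^ 2 : ℝ≥0) * t ^ 2 / 2) := by
          gcongr
          exact ih hm hmc _
      _ = exp ((∑ i, (c i / 2) ^ 2 : ℝ≥0) * t ^ 2 / 2) := by
          rw [← exp_add, Fin.sum_univ_succ, NNReal.coe_add]
          congr 1
          ring

theorem hasSubgaussianMGF_sub_integral_pi {n : ℕ} {f : (Fin n → α) → ℝ} {c : Fin n → ℝ≥0}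
    (hf : Measurable f) (hfc : HasBoundedDifferences f c)
    (ν : Fin n → Measure α) [∀ i, IsProbabilityMeasure (ν i)] :
    HasSubgaussianMGF (fun x ↦ f x - ∫ y, f y ∂Measure.pi ν) (∑ i, (c i / 2) ^ 2)
      (Measure.pi ν) where
  integrable_exp_mul := (hfc.sub_const _).integrable_exp_mul (hf.sub_const _)
  mgf_le := mgf_sub_integral_pi_le hf hfc ν

theorem iIndepFun.hasSubgaussianMGF_sub_integral {Ω : Type*} [MeasurableSpace Ω]
    {μ : Measure Ω} {n : ℕ} {X : Fin n → Ω → α} (hX : iIndepFun X μ)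
    (hXm : ∀ i, Measurable (X i)) {f : (Fin n → α) → ℝ} {c : Fin n → ℝ≥0}
    (hf : Measurable f) (hfc : HasBoundedDifferences f c) :
    HasSubgaussianMGF (fun ω ↦ f (fun i ↦ X i ω) - ∫ ω', f (fun i ↦ X i ω') ∂μ)
      (∑ i, (c i / 2) ^ 2) μ := by
  have := hX.isProbabilityMeasure
  have (i : Fin n) : IsProbabilityMeasure (μ.map (X i)) :=
    Measure.isProbabilityMeasure_map (hXm i).aemeasurable
  have hΦ : Measurable fun ω i ↦ X i ω := measurable_pi_lambda _ hXm
  have h := hasSubgaussianMGF_sub_integral_pi hf hfc fun i ↦ μ.map (X i)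
  rw [← hX.map_fun_eq_pi_map fun i ↦ (hXm i).aemeasurable,
    integral_map hΦ.aemeasurable hf.aestronglyMeasurable] at h
  exact h.of_map hΦ.aemeasurable

end McDiarmid

end ProbabilityTheory

section CrestFactor

variable {n : ℕ} {T : ℝ}

lemma ofdm_sub (x y : Fin n → ℂ) (t : ℝ) :
    ofdm n T x t - ofdm n T y t = ofdm n T (x - y) t := by
  simp only [ofdm, ← mul_sub, ← Finset.sum_sub_distrib, ← sub_mul, Pi.sub_apply]

lemma norm_ofdm_le (x : Fin n → ℂ) (t : ℝ) : ‖ofdm n T x t‖ ≤ (√n)⁻¹ * ∑ i, ‖x i‖ := by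
  rw [ofdm, norm_mul, norm_inv, Complex.norm_real, norm_of_nonneg (sqrt_nonneg _)]
  gcongr
  refine (norm_sum_le _ _).trans_eq (Finset.sum_congr rfl fun i _ ↦ ?_)
  rw [norm_mul, Complex.norm_exp_I_mul_ofReal, mul_one]

lemma crest_sub_le (hT : 0 ≤ T) (x y : Fin n → ℂ) :
    crest n T x - crest n T y ≤ (√n)⁻¹ * ∑ i, ‖x i - y i‖ := by
  have hbdd (z : Fin n → ℂ) : BddAbove ((fun t ↦ ‖ofdm n T z t‖) '' Set.Icc 0 T) :=
    ⟨_, Set.forall_mem_image.2 fun t _ ↦ norm_ofdm_le z t⟩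
  rw [sub_le_iff_le_add]
  refine csSup_le ((Set.nonempty_Icc.2 hT).image _) (Set.forall_mem_image.2 fun t ht ↦ ?_)
  calc ‖ofdm n T x t‖ ≤ ‖ofdm n T (x - y) t‖ + ‖ofdm n T y t‖ := by
        rw [← ofdm_sub]; exact norm_le_norm_sub_add _ _
    _ ≤ (√n)⁻¹ * ∑ i, ‖x i - y i‖ + crest n T y :=
        add_le_add (norm_ofdm_le _ t) (le_csSup (hbdd y) ⟨t, ht, rfl⟩)

lemma continuous_crest (hT : 0 ≤ T) : Continuous (crest n T) := by
  refine (LipschitzWith.of_dist_le' (K := (√n)⁻¹ * n) fun x y ↦ ?_).continuous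
  have hsum : ∑ i, ‖x i - y i‖ ≤ n * dist x y := by
    simpa [← dist_eq_norm] using Finset.sum_le_card_nsmul univ _ _ fun i _ ↦ dist_le_pi_dist x y i
  rw [Real.dist_eq, abs_sub_le_iff, mul_assoc]
  constructor
  · exact (crest_sub_le hT x y).trans (by gcongr)
  · refine (crest_sub_le hT y x).trans ?_
    simp_rw [norm_sub_rev (y _)]
    gcongr

end CrestFactor

noncomputable def circleRetract (z : ℂ) : ℂ := if ‖z‖ = 1 then z else 1

lemma norm_circleRetract (z : ℂ) : ‖circleRetract z‖ = 1 := by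
  unfold circleRetract; split_ifs with h <;> simp [h]

lemma circleRetract_of_norm_eq_one {z : ℂ} (h : ‖z‖ = 1) : circleRetract z = z := if_pos h

lemma measurable_circleRetract : Measurable circleRetract :=
  Measurable.ite (measurableSet_eq_fun measurable_norm measurable_const) measurable_id
    measurable_const

lemma hasBoundedDifferences_crest_circleRetract {n : ℕ} {T : ℝ} (hT : 0 ≤ T) :
    ProbabilityTheory.HasBoundedDifferences (fun x : Fin n → ℂ ↦ crest n T (circleRetract ∘ x))
      fun _ ↦ 2 / NNReal.sqrt n := fun x i a ↦ by
  show crest n T (circleRetract ∘ Function.update x i a) - crest n T (circleRetract ∘ x) ≤ _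
  rw [Function.comp_update]
  refine (crest_sub_le hT _ _).trans ?_
  rw [Finset.sum_eq_single i (fun j _ hj ↦ by simp [hj]) (by simp)]
  have : ‖circleRetract a - circleRetract (x i)‖ ≤ 2 :=
    (norm_sub_le _ _).trans (by simp [norm_circleRetract]; norm_num)
  push_cast [Real.coe_sqrt]
  simpa [div_eq_inv_mul] using mul_le_mul_of_nonneg_left this (inv_nonneg.2 (sqrt_nonneg n))

lemma sum_sq_half_two_div_sqrt {n : ℕ} (hn : 0 < n) :
    ∑ _i : Fin n, (2 / NNReal.sqrt n / 2) ^ 2 = 1 := by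
  rw [div_right_comm, div_self two_ne_zero, one_div, inv_pow, NNReal.sq_sqrt, sum_const,
    card_univ, Fintype.card_fin, nsmul_eq_mul, mul_inv_cancel₀ (by positivity)]

theorem stmt_6_general {Ω : Type*} [MeasurableSpace Ω] (μ : Measure Ω)
    (n : ℕ) (hn : 0 < n) (T : ℝ) (hT : 0 < T)
    (X : Fin n → Ω → ℂ) (hmeas : ∀ j, Measurable (X j))
    (hindep : ProbabilityTheory.iIndepFun X μ)
    (hunit : ∀ j, ∀ᵐ ω ∂μ, ‖X j ω‖ = 1)
    (α : ℝ) (hα : 0 ≤ α) :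
    (μ {ω | α ≤ |crest n T (fun j => X j ω) -
        ∫ ω', crest n T (fun j => X j ω') ∂μ|}).toReal ≤
      2 * Real.exp (-α ^ 2 / 2) := by
  set F : (Fin n → ℂ) → ℝ := fun x ↦ crest n T (circleRetract ∘ x)
  have hF : Measurable F := (continuous_crest hT.le).measurable.comp
    (measurable_pi_lambda _ fun i ↦ measurable_circleRetract.comp (measurable_pi_apply i))
  have hFX : (fun ω ↦ F fun j ↦ X j ω) =ᵐ[μ] fun ω ↦ crest n T fun j ↦ X j ω := by
    filter_upwards [ae_all_iff.2 hunit] with ω hω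
    simp only [F, Function.comp_def, circleRetract_of_norm_eq_one (hω _)]
  have hsub := (hindep.hasSubgaussianMGF_sub_integral hmeas hF
    (hasBoundedDifferences_crest_circleRetract hT.le)).congr
      (by filter_upwards [hFX] with ω hω; rw [hω, integral_congr_ae hFX])
  rw [sum_sq_half_two_div_sqrt hn] at hsub
  rw [← measureReal_def]
  simpa using hsub.measureReal_abs_ge_le hα

theorem stmt_6 {Ω : Type*} [MeasurableSpace Ω] (μ : Measure Ω) [IsProbabilityMeasure μ]
    (n : ℕ) (hn : 0 < n) (T : ℝ) (hT : 0 < T)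
    (X : Fin n → Ω → ℂ) (hmeas : ∀ j, Measurable (X j))
    (hindep : ProbabilityTheory.iIndepFun X μ)
    (hunit : ∀ j, ∀ᵐ ω ∂μ, ‖X j ω‖ = 1)
    (α : ℝ) (hα : 0 ≤ α) :
    (μ {ω | α ≤ |crest n T (fun j => X j ω) -
        ∫ ω', crest n T (fun j => X j ω') ∂μ|}).toReal ≤
      2 * Real.exp (-α ^ 2 / 2) :=
  stmt_6_general μ n hn T hT X hmeas hindep hunit α hα
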